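/- If a univariate polynomial matrix M : ℝ → (n×n symmetric real matrices), each entry of degree at most d with d even, satisfies M(s) ⪰ 0 for all s ∈ [0,1], then ∫₀¹ M(s) ds ⪰ (1/(2(d²−1))) · M(1) in the Loewner order. -/

import Mathlib

/-!
A polynomial `p` that is nonnegative on `[0, 1]` is a sum of terms `xⁱ (1 - x)ʲ a(x)²`, each of
degree at most `deg p`: factor `p` over `ℂ`; a real root `r ≤ 0` or `r ≥ 1` splits off the factor
`x - r` or `r - x`, a root in `(0, 1)` is a double root, and a pair of non-real roots gives a
sum of two squares. Terms with `j > 0` vanish at `1`. A term `t = xⁱ a²` with `deg t ≤ 2m`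
dominates `c²` on `[0, 1]`, where `c = x^⌈i/2⌉ a` has degree `≤ m` and `c(1)² = t(1)`; and
`c(1)² ≤ (m + 1)² ∫₀¹ c²`, by expanding `c` in shifted Legendre polynomials (`|Pₖ(1)| = 1`,
`∫₀¹ Pₖ² = 1/(2k + 1)`) and Cauchy–Schwarz. Hence `p(1) ≤ (m + 1)² ∫₀¹ p` when `deg p ≤ 2m`;
apply this to the quadratic forms `s ↦ xᵀ M(s) x`, using `1/(2(d² - 1)) ≤ 1/(m + 1)²` for `d = 2m`.
-/

open Polynomial Set
open scoped Nat Pointwise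

namespace Polynomial

noncomputable def unitIntegral : ℝ[X] →ₗ[ℝ] ℝ where
  toFun p := ∫ x in (0 : ℝ)..1, p.eval x
  map_add' p q := by
    simpa only [eval_add] using intervalIntegral.integral_add
      (p.continuous.intervalIntegrable 0 1) (q.continuous.intervalIntegrable 0 1)
  map_smul' c p := by simp [intervalIntegral.integral_const_mul]

lemma unitIntegral_apply (p : ℝ[X]) : unitIntegral p = ∫ x in (0 : ℝ)..1, p.eval x := rfl

lemma unitIntegral_derivative (p : ℝ[X]) :
    unitIntegral (derivative p) = p.eval 1 - p.eval 0 :=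
  intervalIntegral.integral_eq_sub_of_hasDerivAt (fun x _ ↦ p.hasDerivAt x)
    ((derivative p).continuous.intervalIntegrable 0 1)

lemma unitIntegral_mono {p q : ℝ[X]} (h : ∀ x ∈ Icc (0 : ℝ) 1, p.eval x ≤ q.eval x) :
    unitIntegral p ≤ unitIntegral q :=
  intervalIntegral.integral_mono_on zero_le_one (p.continuous.intervalIntegrable 0 1)
    (q.continuous.intervalIntegrable 0 1) h

lemma unitIntegral_nonneg {p : ℝ[X]} (h : ∀ x ∈ Icc (0 : ℝ) 1, 0 ≤ p.eval x) :
    0 ≤ unitIntegral p :=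
  intervalIntegral.integral_nonneg zero_le_one h

lemma unitIntegral_X_pow (a : ℕ) : unitIntegral (X ^ a) = 1 / (a + 1) := by
  simp [unitIntegral_apply, integral_pow]

lemma unitIntegral_mul_derivative {u v : ℝ[X]} (h0 : v.IsRoot 0) (h1 : v.IsRoot 1) :
    unitIntegral (u * derivative v) = -unitIntegral (derivative u * v) := by
  have := unitIntegral_derivative (u * v)
  rw [derivative_mul, map_add] at this
  simp only [eval_mul, h0.eq_zero, h1.eq_zero, mul_zero, sub_zero] at this
  linarith

lemma unitIntegral_mul_iterate_derivative {v : ℝ[X]} {k : ℕ}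
    (h0 : ∀ j < k, (derivative^[j] v).IsRoot 0) (h1 : ∀ j < k, (derivative^[j] v).IsRoot 1)
    (u : ℝ[X]) :
    unitIntegral (u * derivative^[k] v) = (-1) ^ k * unitIntegral (derivative^[k] u * v) := by
  induction k generalizing v with
  | zero => simp
  | succ k ih =>
    have hv0 : v.IsRoot 0 := h0 0 k.succ_pos
    have hv1 : v.IsRoot 1 := h1 0 k.succ_pos
    rw [Function.iterate_succ_apply,
      ih (fun j hj ↦ h0 (j + 1) (by omega)) (fun j hj ↦ h1 (j + 1) (by omega)),
      unitIntegral_mul_derivative hv0 hv1,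
      ← Function.iterate_succ_apply' derivative, pow_succ]
    ring

lemma derivative_X_pow_mul_one_sub_X_pow (a b : ℕ) :
    derivative ((X : ℝ[X]) ^ (a + 1) * (1 - X) ^ (b + 1)) =
      ((a : ℝ) + 1) • (X ^ a * (1 - X) ^ (b + 1)) -
        ((b : ℝ) + 1) • (X ^ (a + 1) * (1 - X) ^ b) := by
  simp only [derivative_mul, derivative_pow, derivative_sub, derivative_one,
    derivative_X, ← C_mul', Nat.add_sub_cancel]
  push_cast
  ring

theorem unitIntegral_X_pow_mul_one_sub_X_pow (a b : ℕ) :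
    unitIntegral (X ^ a * (1 - X) ^ b) = a ! * b ! / (a + b + 1)! := by
  induction b generalizing a with
  | zero =>
    rw [pow_zero, mul_one, unitIntegral_X_pow, add_zero, Nat.factorial_succ, Nat.factorial_zero]
    push_cast
    field_simp
  | succ b ih =>
    have key := unitIntegral_derivative ((X : ℝ[X]) ^ (a + 1) * (1 - X) ^ (b + 1))
    rw [derivative_X_pow_mul_one_sub_X_pow, map_sub, map_smul, map_smul, ih] at key
    simp only [eval_mul, eval_pow, eval_X, eval_sub, eval_one, sub_self, smul_eq_mul,
      zero_pow (Nat.succ_ne_zero _), mul_zero, zero_mul, sub_zero] at key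
    rw [Nat.factorial_succ a] at key
    rw [show a + (b + 1) + 1 = a + 1 + b + 1 by omega, Nat.factorial_succ b]
    push_cast at key ⊢
    apply mul_left_cancel₀ (by positivity : (a : ℝ) + 1 ≠ 0)
    linear_combination key

lemma IsRoot.iterate_derivative_of_pow_dvd {R : Type*} [CommRing R] {p q : R[X]} {t : R} {n j : ℕ}
    (hq : q.IsRoot t) (h : q ^ n ∣ p) (hj : j < n) : (derivative^[j] p).IsRoot t :=
  (hq.dvd (dvd_pow_self q (by omega : n - j ≠ 0))).dvd
    (pow_sub_dvd_iterate_derivative_of_pow_dvd j h)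

lemma iterate_derivative_eq_C_of_natDegree_le {R : Type*} [Semiring R] {p : R[X]} {n : ℕ}
    (h : p.natDegree ≤ n) : derivative^[n] p = C ((n ! : R) * p.coeff n) := by
  rw [eq_C_of_natDegree_le_zero ((natDegree_iterate_derivative p n).trans (by omega)),
    coeff_iterate_derivative, zero_add, Nat.descFactorial_self, nsmul_eq_mul]

noncomputable def shiftedLegendreReal (n : ℕ) : ℝ[X] := (shiftedLegendre n).map (Int.castRingHom ℝ)

lemma degree_shiftedLegendreReal (n : ℕ) : (shiftedLegendreReal n).degree = n := by
  rw [shiftedLegendreReal, degree_map_eq_of_injective (RingHom.injective_int _),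
    degree_shiftedLegendre]

lemma natDegree_shiftedLegendreReal (n : ℕ) : (shiftedLegendreReal n).natDegree = n :=
  natDegree_eq_of_degree_eq_some (degree_shiftedLegendreReal n)

lemma coeff_shiftedLegendreReal_self (n : ℕ) :
    (shiftedLegendreReal n).coeff n = (-1) ^ n * (2 * n).choose n := by
  simp [shiftedLegendreReal, coeff_shiftedLegendre, two_mul]

lemma eval_one_shiftedLegendreReal (n : ℕ) : (shiftedLegendreReal n).eval 1 = (-1) ^ n := by
  have := shiftedLegendre_eval_symm n (1 : ℝ)
  rw [sub_self, ← coeff_zero_eq_aeval_zero', coeff_shiftedLegendre] at this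
  simpa [shiftedLegendreReal, eval_map, aeval_def] using this

lemma factorial_smul_shiftedLegendreReal (n : ℕ) :
    (n ! : ℝ) • shiftedLegendreReal n = derivative^[n] (X ^ n * (1 - X) ^ n) := by
  have := congrArg (map (Int.castRingHom ℝ)) (factorial_mul_shiftedLegendre_eq n)
  simpa [shiftedLegendreReal, ← iterate_derivative_map, smul_eq_C_mul] using this

lemma unitIntegral_mul_shiftedLegendreReal (n : ℕ) (u : ℝ[X]) :
    unitIntegral (u * shiftedLegendreReal n) =
      (-1) ^ n / n ! * unitIntegral (derivative^[n] u * (X ^ n * (1 - X) ^ n)) := by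
  have hn : (n ! : ℝ) ≠ 0 := by positivity
  have h0 (j : ℕ) (hj : j < n) : (derivative^[j] ((X : ℝ[X]) ^ n * (1 - X) ^ n)).IsRoot 0 :=
    (by simp : (X : ℝ[X]).IsRoot 0).iterate_derivative_of_pow_dvd (dvd_mul_right _ _) hj
  have h1 (j : ℕ) (hj : j < n) : (derivative^[j] ((X : ℝ[X]) ^ n * (1 - X) ^ n)).IsRoot 1 :=
    (by simp : (1 - X : ℝ[X]).IsRoot 1).iterate_derivative_of_pow_dvd (dvd_mul_left _ _) hj
  rw [← inv_smul_smul₀ hn (shiftedLegendreReal n), factorial_smul_shiftedLegendreReal,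
    mul_smul_comm, map_smul, unitIntegral_mul_iterate_derivative h0 h1, smul_eq_mul]
  ring

lemma unitIntegral_mul_shiftedLegendreReal_of_natDegree_lt {u : ℝ[X]} {n : ℕ}
    (h : u.natDegree < n) : unitIntegral (u * shiftedLegendreReal n) = 0 := by
  rw [unitIntegral_mul_shiftedLegendreReal, iterate_derivative_eq_zero h, zero_mul, map_zero,
    mul_zero]

lemma unitIntegral_shiftedLegendreReal_mul_self (n : ℕ) :
    unitIntegral (shiftedLegendreReal n * shiftedLegendreReal n) = 1 / (2 * n + 1) := by
  rw [unitIntegral_mul_shiftedLegendreReal, iterate_derivative_eq_C_of_natDegree_le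
    (natDegree_shiftedLegendreReal n).le, coeff_shiftedLegendreReal_self, ← smul_eq_C_mul,
    map_smul, unitIntegral_X_pow_mul_one_sub_X_pow, smul_eq_mul]
  have hchoose : ((2 * n).choose n : ℝ) * n ! * n ! = (2 * n)! := by
    exact_mod_cast two_mul n ▸ Nat.add_choose_mul_factorial_mul_factorial n n
  rw [show n + n + 1 = 2 * n + 1 by omega, Nat.factorial_succ]
  have hsign : ((-1 : ℝ) ^ n) ^ 2 = 1 := by rw [← pow_mul, pow_mul']; simp
  push_cast
  field_simp
  linear_combination (-1) ^ (2 * n) * hchoose + ((2 * n)! : ℝ) * hsign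

lemma unitIntegral_shiftedLegendreReal_mul (j k : ℕ) :
    unitIntegral (shiftedLegendreReal j * shiftedLegendreReal k) =
      if j = k then 1 / (2 * (k : ℝ) + 1) else 0 := by
  split_ifs with h
  · rw [h, unitIntegral_shiftedLegendreReal_mul_self]
  rcases lt_or_gt_of_ne h with h | h
  · exact unitIntegral_mul_shiftedLegendreReal_of_natDegree_lt
      ((natDegree_shiftedLegendreReal j).trans_lt h)
  · rw [mul_comm]
    exact unitIntegral_mul_shiftedLegendreReal_of_natDegree_lt
      ((natDegree_shiftedLegendreReal k).trans_lt h)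

lemma exists_eq_sum_smul_shiftedLegendreReal {b : ℝ[X]} {m : ℕ} (hb : b.natDegree ≤ m) :
    ∃ c : ℕ → ℝ, ∑ k ∈ Finset.range (m + 1), c k • shiftedLegendreReal k = b := by
  let S : Sequence ℝ := ⟨shiftedLegendreReal, degree_shiftedLegendreReal⟩
  have hb' : b ∈ degreeLT ℝ (m + 1) :=
    mem_degreeLT.2 ((degree_le_of_natDegree_le hb).trans_lt (by exact_mod_cast m.lt_succ_self))
  rw [← S.span_degreeLT fun i _ ↦ (leadingCoeff_ne_zero.2 (S.ne_zero i)).isUnit,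
    ← Finset.coe_range] at hb'
  exact (Submodule.mem_span_image_finset_iff_exists_fun' ℝ).1 hb'

lemma sum_range_two_mul_add_one (m : ℕ) :
    ∑ k ∈ Finset.range m, (2 * (k : ℝ) + 1) = m ^ 2 := by
  induction m with
  | zero => simp
  | succ m ih => rw [Finset.sum_range_succ, ih]; push_cast; ring

theorem sq_eval_one_le_mul_unitIntegral_sq {b : ℝ[X]} {m : ℕ} (hb : b.natDegree ≤ m) :
    b.eval 1 ^ 2 ≤ (m + 1) ^ 2 * unitIntegral (b ^ 2) := by
  obtain ⟨c, rfl⟩ := exists_eq_sum_smul_shiftedLegendreReal hb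
  set s := Finset.range (m + 1)
  have heval : eval 1 (∑ k ∈ s, c k • shiftedLegendreReal k) = ∑ k ∈ s, c k * (-1) ^ k := by
    simp only [eval_finsetSum, eval_smul, eval_one_shiftedLegendreReal, smul_eq_mul]
  have hint : unitIntegral ((∑ k ∈ s, c k • shiftedLegendreReal k) ^ 2) =
      ∑ k ∈ s, c k ^ 2 / (2 * k + 1) := by
    simp only [sq, Finset.sum_mul_sum, smul_mul_smul_comm, map_sum, map_smul,
      unitIntegral_shiftedLegendreReal_mul, smul_eq_mul, mul_ite, mul_zero, Finset.sum_ite_eq]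
    exact Finset.sum_congr rfl fun k hk ↦ by rw [if_pos hk]; ring
  have titu := Finset.sq_sum_div_le_sum_sq_div s (fun k ↦ c k * (-1) ^ k)
    (g := fun k ↦ 2 * (k : ℝ) + 1) fun _ _ ↦ by positivity
  simp only [mul_pow, ← pow_mul, pow_mul', neg_one_sq, one_pow, mul_one] at titu
  rw [sum_range_two_mul_add_one, div_le_iff₀ (by positivity)] at titu
  rw [heval, hint]
  push_cast at titu
  linarith

/-- The degree-`n` generators of the preordering of `ℝ[X]` generated by `X` and `1 - X`. -/
noncomputable def weightedSquares (n : ℕ) : Set ℝ[X] :=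
  {t | ∃ (i j : ℕ) (a : ℝ[X]), t = X ^ i * (1 - X) ^ j * a ^ 2 ∧ t.natDegree ≤ n}

noncomputable def sumsOfWeightedSquares (n : ℕ) : AddSubmonoid ℝ[X] :=
  AddSubmonoid.closure (weightedSquares n)

lemma sq_mem_sumsOfWeightedSquares {a : ℝ[X]} {n : ℕ} (h : (a ^ 2).natDegree ≤ n) :
    a ^ 2 ∈ sumsOfWeightedSquares n :=
  AddSubmonoid.subset_closure ⟨0, 0, a, by ring, h⟩

lemma C_mem_sumsOfWeightedSquares {c : ℝ} (hc : 0 ≤ c) (n : ℕ) :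
    C c ∈ sumsOfWeightedSquares n := by
  rw [← Real.sq_sqrt hc, C_pow]
  exact sq_mem_sumsOfWeightedSquares (by simp)

lemma X_mem_sumsOfWeightedSquares : X ∈ sumsOfWeightedSquares 1 :=
  AddSubmonoid.subset_closure ⟨1, 0, 1, by ring, by simp⟩

lemma one_sub_X_mem_sumsOfWeightedSquares : 1 - X ∈ sumsOfWeightedSquares 1 :=
  AddSubmonoid.subset_closure ⟨0, 1, 1, by ring, by compute_degree⟩

lemma weightedSquares_mono {n n' : ℕ} (h : n ≤ n') : weightedSquares n ⊆ weightedSquares n' :=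
  fun _ ⟨i, j, a, ht, hdeg⟩ ↦ ⟨i, j, a, ht, hdeg.trans h⟩

lemma mul_mem_weightedSquares {s t : ℝ[X]} {n n' : ℕ} (hs : s ∈ weightedSquares n)
    (ht : t ∈ weightedSquares n') : s * t ∈ weightedSquares (n + n') := by
  obtain ⟨i, j, a, rfl, hs⟩ := hs
  obtain ⟨i', j', a', rfl, ht⟩ := ht
  exact ⟨i + i', j + j', a * a', by ring, natDegree_mul_le.trans (add_le_add hs ht)⟩

lemma mul_mem_sumsOfWeightedSquares {p q : ℝ[X]} {n n' : ℕ}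
    (hp : p ∈ sumsOfWeightedSquares n) (hq : q ∈ sumsOfWeightedSquares n') :
    p * q ∈ sumsOfWeightedSquares (n + n') := by
  have := AddSubmonoid.mul_mem_mul hp hq
  rw [sumsOfWeightedSquares, sumsOfWeightedSquares, AddSubmonoid.closure_mul_closure] at this
  exact AddSubmonoid.closure_mono
    (Set.mul_subset_iff.2 fun s hs t ht ↦ mul_mem_weightedSquares hs ht) this

lemma nonneg_of_mul_nonneg_on_Icc {f q : ℝ[X]} {a b : ℝ} (hab : a ≠ b) (hf : f ≠ 0)
    (hf₀ : ∀ s ∈ Icc a b, 0 ≤ f.eval s) (hfq : ∀ s ∈ Icc a b, 0 ≤ (f * q).eval s) :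
    ∀ s ∈ Icc a b, 0 ≤ q.eval s := by
  have hdense : Dense {s | f.IsRoot s}ᶜ := (finite_setOfPred_isRoot hf).countable.dense_compl ℝ
  have hclosed : IsClosed {s | 0 ≤ q.eval s} := isClosed_le continuous_const q.continuous
  have hoff : Ioo a b ∩ {s | f.IsRoot s}ᶜ ⊆ {s | 0 ≤ q.eval s} := fun s ⟨hs, hroot⟩ ↦ by
    have hpos : 0 < f.eval s := (hf₀ s (Ioo_subset_Icc_self hs)).lt_of_ne' hroot
    have := hfq s (Ioo_subset_Icc_self hs)
    rw [eval_mul] at this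
    exact nonneg_of_mul_nonneg_right this hpos
  rw [← closure_Ioo hab]
  exact closure_minimal ((hdense.open_subset_closure_inter isOpen_Ioo).trans
    (closure_minimal hoff hclosed)) hclosed

lemma X_sub_C_sq_dvd_of_isLocalMin {p : ℝ[X]} {r : ℝ} (hr : p.IsRoot r)
    (hmin : IsLocalMin (fun x ↦ p.eval x) r) : (X - C r) ^ 2 ∣ p := by
  rcases eq_or_ne p 0 with rfl | hp
  · exact dvd_zero _
  rw [← le_rootMultiplicity_iff hp]
  exact (one_lt_rootMultiplicity_iff_isRoot hp).2
    ⟨hr, by simpa only [IsRoot, Polynomial.deriv] using hmin.deriv_eq_zero⟩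

lemma X_sub_C_mem_sumsOfWeightedSquares {r : ℝ} (hr : r ≤ 0) :
    X - C r ∈ sumsOfWeightedSquares 1 := by
  rw [sub_eq_add_neg, ← C_neg]
  exact add_mem X_mem_sumsOfWeightedSquares (C_mem_sumsOfWeightedSquares (by linarith) 1)

lemma C_sub_X_mem_sumsOfWeightedSquares {r : ℝ} (hr : 1 ≤ r) :
    C r - X ∈ sumsOfWeightedSquares 1 := by
  rw [show C r - X = (1 - X) + C (r - 1) by rw [C_sub, C_1]; ring]
  exact add_mem one_sub_X_mem_sumsOfWeightedSquares (C_mem_sumsOfWeightedSquares (by linarith) 1)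

lemma exists_dvd_mem_sumsOfWeightedSquares_of_isRoot {p : ℝ[X]}
    (hp : ∀ s ∈ Icc (0 : ℝ) 1, 0 ≤ p.eval s) {r : ℝ} (hr : p.IsRoot r) :
    ∃ f, f ∣ p ∧ 0 < f.natDegree ∧ f ∈ sumsOfWeightedSquares f.natDegree ∧
      ∀ s ∈ Icc (0 : ℝ) 1, 0 ≤ f.eval s := by
  rcases le_or_gt r 0 with hr0 | hr0
  · refine ⟨X - C r, dvd_iff_isRoot.2 hr, by simp, ?_, fun s hs ↦ ?_⟩
    · simpa using X_sub_C_mem_sumsOfWeightedSquares hr0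
    · simp only [eval_sub, eval_X, eval_C]
      linarith [hs.1]
  rcases le_or_gt 1 r with hr1 | hr1
  · have hdeg : (C r - X).natDegree = 1 := by rw [← neg_sub, natDegree_neg, natDegree_X_sub_C]
    refine ⟨C r - X, ?_, by simp [hdeg], ?_, fun s hs ↦ ?_⟩
    · rw [← neg_sub, neg_dvd]
      exact dvd_iff_isRoot.2 hr
    · simpa [hdeg] using C_sub_X_mem_sumsOfWeightedSquares hr1
    · simp only [eval_sub, eval_X, eval_C]
      linarith [hs.2]
  have hmin : IsLocalMin (fun x ↦ p.eval x) r := by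
    filter_upwards [isOpen_Ioo.mem_nhds ⟨hr0, hr1⟩] with x hx
    rw [hr.eq_zero]
    exact hp x (Ioo_subset_Icc_self hx)
  exact ⟨(X - C r) ^ 2, X_sub_C_sq_dvd_of_isLocalMin hr hmin, by simp,
    sq_mem_sumsOfWeightedSquares le_rfl, fun s _ ↦ by simp only [eval_pow]; positivity⟩

lemma exists_dvd_mem_sumsOfWeightedSquares {p : ℝ[X]}
    (hp : ∀ s ∈ Icc (0 : ℝ) 1, 0 ≤ p.eval s) (hdeg : 0 < p.natDegree) :
    ∃ f, f ∣ p ∧ 0 < f.natDegree ∧ f ∈ sumsOfWeightedSquares f.natDegree ∧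
      ∀ s ∈ Icc (0 : ℝ) 1, 0 ≤ f.eval s := by
  obtain ⟨z, hz⟩ := IsAlgClosed.exists_aeval_eq_zero ℂ p (natDegree_pos_iff_degree_pos.1 hdeg).ne'
  by_cases him : z.im = 0
  · rw [show z = algebraMap ℝ ℂ z.re from Complex.ext rfl him, aeval_algebraMap_apply] at hz
    exact exists_dvd_mem_sumsOfWeightedSquares_of_isRoot hp (by simpa using hz)
  have hquad : X ^ 2 - C (2 * z.re) * X + C (‖z‖ ^ 2) = (X - C z.re) ^ 2 + C z.im ^ 2 := by
    simp only [Complex.sq_norm, Complex.normSq_apply, map_add, map_mul, map_ofNat]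
    ring
  have hdeg2 : (X ^ 2 - C (2 * z.re) * X + C (‖z‖ ^ 2)).natDegree = 2 := by compute_degree!
  refine ⟨_, quadratic_dvd_of_aeval_eq_zero_im_ne_zero p hz him, by omega, ?_, fun s _ ↦ ?_⟩
  · rw [hdeg2, hquad]
    exact add_mem (sq_mem_sumsOfWeightedSquares (by simp))
      (sq_mem_sumsOfWeightedSquares (by rw [← C_pow, natDegree_C]; omega))
  · rw [hquad]
    simp only [eval_add, eval_pow, eval_sub, eval_X, eval_C]
    positivity

theorem mem_sumsOfWeightedSquares_of_nonneg {p : ℝ[X]}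
    (hp : ∀ s ∈ Icc (0 : ℝ) 1, 0 ≤ p.eval s) : p ∈ sumsOfWeightedSquares p.natDegree := by
  induction h : p.natDegree using Nat.strong_induction_on generalizing p with
  | _ n ih =>
  rcases Nat.eq_zero_or_pos n with rfl | hn
  · rw [eq_C_of_natDegree_eq_zero h]
    exact C_mem_sumsOfWeightedSquares (by simpa [coeff_zero_eq_eval_zero] using hp 0 (by simp)) 0
  obtain ⟨f, ⟨q, rfl⟩, hf, hfS, hf₀⟩ := exists_dvd_mem_sumsOfWeightedSquares hp (h ▸ hn)
  have hf0 : f ≠ 0 := ne_zero_of_natDegree_gt hf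
  have hq0 : q ≠ 0 := by rintro rfl; simp at h; omega
  rw [natDegree_mul hf0 hq0] at h
  have hq := nonneg_of_mul_nonneg_on_Icc zero_ne_one hf0 hf₀ hp
  exact h ▸ mul_mem_sumsOfWeightedSquares hfS (ih _ (by omega) hq rfl)

lemma eval_one_le_of_mem_weightedSquares {t : ℝ[X]} {m : ℕ} (ht : t ∈ weightedSquares (2 * m)) :
    t.eval 1 ≤ (m + 1) ^ 2 * unitIntegral t := by
  obtain ⟨i, j, a, rfl, hdeg⟩ := ht
  have hnonneg : ∀ s ∈ Icc (0 : ℝ) 1, 0 ≤ (X ^ i * (1 - X) ^ j * a ^ 2).eval s := fun s hs ↦ by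
    have := sub_nonneg.2 hs.2
    simp only [eval_mul, eval_pow, eval_sub, eval_one, eval_X]
    exact mul_nonneg (mul_nonneg (pow_nonneg hs.1 _) (pow_nonneg this _)) (sq_nonneg _)
  rcases j with _ | j
  · set t := X ^ i * (1 - X) ^ 0 * a ^ 2
    set c := X ^ (i / 2 + i % 2) * a
    have hc : c ^ 2 = X ^ (i % 2) * t := by
      have : 2 * (i / 2 + i % 2) = i % 2 + i := by omega
      rw [mul_pow, ← pow_mul, mul_comm _ 2, this, pow_add]
      ring
    have hcdeg : c.natDegree ≤ m := by
      have : (c ^ 2).natDegree ≤ i % 2 + t.natDegree := by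
        rw [hc]
        exact natDegree_mul_le.trans (add_le_add (natDegree_X_pow_le _) le_rfl)
      rw [natDegree_pow] at this
      omega
    calc t.eval 1 = c.eval 1 ^ 2 := by rw [← eval_pow, hc]; simp
      _ ≤ (m + 1) ^ 2 * unitIntegral (c ^ 2) := sq_eval_one_le_mul_unitIntegral_sq hcdeg
      _ ≤ (m + 1) ^ 2 * unitIntegral t := by
        gcongr
        refine unitIntegral_mono fun s hs ↦ ?_
        rw [hc, eval_mul, eval_X_pow]
        exact mul_le_of_le_one_left (hnonneg s hs) (pow_le_one₀ hs.1 hs.2)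
  · simp only [eval_mul, eval_pow, eval_sub, eval_one, eval_X, sub_self,
      zero_pow (Nat.succ_ne_zero _), mul_zero, zero_mul]
    exact mul_nonneg (by positivity) (unitIntegral_nonneg hnonneg)

lemma eval_one_le_of_mem_sumsOfWeightedSquares {p : ℝ[X]} {m : ℕ}
    (hp : p ∈ sumsOfWeightedSquares (2 * m)) : p.eval 1 ≤ (m + 1) ^ 2 * unitIntegral p := by
  induction hp using AddSubmonoid.closure_induction with
  | mem t ht => exact eval_one_le_of_mem_weightedSquares ht
  | zero => simp
  | add p q _ _ hp hq => rw [eval_add, map_add, mul_add]; exact add_le_add hp hq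

theorem eval_one_le_mul_unitIntegral {p : ℝ[X]} {m : ℕ}
    (hp : ∀ s ∈ Icc (0 : ℝ) 1, 0 ≤ p.eval s) (hdeg : p.natDegree ≤ 2 * m) :
    p.eval 1 ≤ (m + 1) ^ 2 * unitIntegral p :=
  eval_one_le_of_mem_sumsOfWeightedSquares <| AddSubmonoid.closure_mono
    (weightedSquares_mono hdeg) (mem_sumsOfWeightedSquares_of_nonneg hp)

end Polynomial

namespace Matrix

lemma dotProduct_map_mulVec {n R A : Type*} [Fintype n] [CommSemiring R] [AddCommMonoid A]
    [Module R A] (f : A →ₗ[R] R) (M : Matrix n n A) (x : n → R) :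
    x ⬝ᵥ (M.map f *ᵥ x) = f (∑ i, ∑ j, (x i * x j) • M i j) := by
  simp only [dotProduct, mulVec, map_apply, map_sum, map_smul, smul_eq_mul, Finset.mul_sum]
  exact Finset.sum_congr rfl fun i _ ↦ Finset.sum_congr rfl fun j _ ↦ by ring

lemma posSemidef_map_of_transpose_eq {n A : Type*} [Fintype n] [AddCommMonoid A] [Module ℝ A]
    (M : Matrix n n A) (hM : Mᵀ = M) (f : A →ₗ[ℝ] ℝ)
    (h : ∀ x : n → ℝ, 0 ≤ f (∑ i, ∑ j, (x i * x j) • M i j)) : (M.map f).PosSemidef :=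
  .of_dotProduct_mulVec_nonneg
    (by rw [IsHermitian, conjTranspose_eq_transpose_of_trivial, ← transpose_map, hM])
    fun x ↦ by simpa only [star_trivial, dotProduct_map_mulVec] using h x

lemma transpose_eq_of_isHermitian_map_eval {n : Type*} (M : Matrix n n ℝ[X]) {S : Set ℝ}
    (hS : S.Infinite) (h : ∀ s ∈ S, (M.map (eval s)).IsHermitian) : Mᵀ = M :=
  Matrix.ext fun i j ↦ eq_of_infinite_eval_eq _ _ (hS.mono fun s hs ↦ by simpa using (h s hs).apply i j)

lemma PosSemidef.eval_sum_smul_nonneg {n : Type*} [Fintype n] {M : Matrix n n ℝ[X]} {s : ℝ}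
    (h : (M.map (eval s)).PosSemidef) (x : n → ℝ) :
    0 ≤ (∑ i, ∑ j, (x i * x j) • M i j).eval s := by
  have hx := h.dotProduct_mulVec_nonneg x
  rwa [star_trivial, show M.map (eval s) = M.map (leval s) from rfl, dotProduct_map_mulVec] at hx

end Matrix

lemma one_div_two_mul_sq_sub_one_le (m : ℕ) :
    1 / (2 * (((m + m : ℕ) : ℝ) ^ 2 - 1)) ≤ 1 / ((m : ℝ) + 1) ^ 2 := by
  rcases Nat.eq_zero_or_pos m with rfl | hm
  · norm_num
  have hm : (1 : ℝ) ≤ m := by exact_mod_cast hm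
  apply one_div_le_one_div_of_le (by positivity)
  push_cast
  nlinarith

theorem stmt1_general (n d : ℕ) (hd_even : Even d)
    (M : Matrix (Fin n) (Fin n) (Polynomial ℝ))
    (hdeg : ∀ i j, (M i j).natDegree ≤ d)
    (hpsd : ∀ s ∈ Set.Icc (0:ℝ) 1, (M.map (Polynomial.eval s)).PosSemidef) :
    ((Matrix.of fun i j => ∫ s in (0:ℝ)..1, (M i j).eval s)
      - (1 / (2 * ((d:ℝ)^2 - 1))) • M.map (Polynomial.eval 1)).PosSemidef := by
  obtain ⟨m, rfl⟩ := hd_even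
  set c : ℝ := 1 / (2 * (((m + m : ℕ) : ℝ) ^ 2 - 1))
  have hmap : (Matrix.of fun i j ↦ ∫ s in (0 : ℝ)..1, (M i j).eval s) - c • M.map (eval 1) =
      M.map (unitIntegral - c • leval (1 : ℝ)) := by
    ext i j
    simp [unitIntegral_apply]
  rw [hmap]
  refine M.posSemidef_map_of_transpose_eq (M.transpose_eq_of_isHermitian_map_eval
    (Icc_infinite zero_lt_one) fun s hs ↦ (hpsd s hs).isHermitian) _ fun x ↦ ?_
  set P := ∑ i, ∑ j, (x i * x j) • M i j
  have hP (s : ℝ) (hs : s ∈ Icc 0 1) : 0 ≤ P.eval s := (hpsd s hs).eval_sum_smul_nonneg x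
  have hPdeg : P.natDegree ≤ 2 * m :=
    natDegree_sum_le_of_forall_le _ _ fun i _ ↦ natDegree_sum_le_of_forall_le _ _ fun j _ ↦
      (natDegree_smul_le _ _).trans ((hdeg i j).trans (by omega))
  have hc := one_div_two_mul_sq_sub_one_le m
  have hbound := eval_one_le_mul_unitIntegral hP hPdeg
  simp only [LinearMap.sub_apply, LinearMap.smul_apply, leval_apply, smul_eq_mul, sub_nonneg]
  calc c * P.eval 1 ≤ 1 / ((m : ℝ) + 1) ^ 2 * P.eval 1 := by gcongr; exact hP 1 (by simp)
    _ ≤ unitIntegral P := by rw [one_div_mul_eq_div, div_le_iff₀ (by positivity)]; linarith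

/-- If a univariate polynomial matrix `M`, each entry of degree at most `d` with `d` even,
is positive semidefinite on `[0,1]`, then `∫₀¹ M(s) ds ⪰ (1/(2(d²−1))) M(0)` in the
Loewner order. -/
theorem stmt1 (n d : ℕ) (hd_even : Even d) (hd : 2 ≤ d)
    (M : Matrix (Fin n) (Fin n) (Polynomial ℝ))
    (hdeg : ∀ i j, (M i j).natDegree ≤ d)
    (hpsd : ∀ s ∈ Set.Icc (0:ℝ) 1, (M.map (Polynomial.eval s)).PosSemidef) :
    ((Matrix.of fun i j => ∫ s in (0:ℝ)..1, (M i j).eval s)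
      - (1 / (2 * ((d:ℝ)^2 - 1))) • M.map (Polynomial.eval 1)).PosSemidef :=
  stmt1_general n d hd_even M hdeg hpsd
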